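/- arXiv:1503.05049 — 3 statements merged into one kernel-verified Lean document; each statement's English description precedes it below -/
import Mathlib

section
/- Let m ≥ 0 be an integer and let e be a tame Coxeter frieze pattern of width m over ℝ. Then e(i,j) = e(j+2, i+m+1) for all i,j ∈ ℤ; that is, the frieze is invariant under the glide reflection with respect to the horizontal median line of the pattern. -/
/-!
Unimodularity makes any two consecutive rows of the tiling linearly independent, and tameness
then puts row `i + 2` in their span.  Comparing two adjacent columns shows that the coefficients
do not depend on the column, so every row, and likewise every column, satisfies a recurrence
`x (n + 2) = a n * x (n + 1) - x n`; the frieze boundary forces `a` to be the diagonal entry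
`e (n + 2) (n + 2)` in both cases.  Hence for fixed `i` both sides of the glide identity solve
the same recurrence in `j` and agree at `j = i - 2, i - 1` by the boundary conditions.
-/

theorem eq_of_recurrence {R : Type*} [Ring R] {a u v : ℤ → R}
    (hu : ∀ n, u (n + 2) = a n * u (n + 1) - u n)
    (hv : ∀ n, v (n + 2) = a n * v (n + 1) - v n)
    {k : ℤ} (h₀ : u k = v k) (h₁ : u (k + 1) = v (k + 1)) : u = v := by
  have key : ∀ n, u n = v n ∧ u (n + 1) = v (n + 1) := by
    intro n
    induction n using Int.inductionOn' (b := k) with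
    | zero => exact ⟨h₀, h₁⟩
    | succ n _ ih =>
      refine ⟨ih.2, ?_⟩
      rw [add_assoc, one_add_one_eq_two, hu, hv, ih.1, ih.2]
    | pred n _ ih =>
      have hu' := hu (n - 1)
      have hv' := hv (n - 1)
      rw [sub_add_cancel, show n - 1 + 2 = n + 1 by ring] at hu' hv'
      refine ⟨?_, by rw [sub_add_cancel, ih.1]⟩
      calc u (n - 1) = a (n - 1) * u n - u (n + 1) := by rw [hu']; abel
        _ = a (n - 1) * v n - v (n + 1) := by rw [ih.1, ih.2]
        _ = v (n - 1) := by rw [hv']; abel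
  exact funext fun n => (key n).1

section Tiling

variable {R : Type*} [CommRing R]

def IsSL2Tiling (e : ℤ → ℤ → R) : Prop :=
  ∀ i j : ℤ, e i j * e (i + 1) (j + 1) - e i (j + 1) * e (i + 1) j = 1

def IsTameTiling (e : ℤ → ℤ → R) : Prop :=
  ∀ i j : ℤ, Matrix.det (Matrix.of fun r c : Fin 3 => e (i + (r : ℕ)) (j + (c : ℕ))) = 0

variable {e : ℤ → ℤ → R}

theorem IsSL2Tiling.swap (h : IsSL2Tiling e) : IsSL2Tiling (Function.swap e) :=
  fun i j => by simp only [Function.swap]; linear_combination h j i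

theorem IsTameTiling.swap (h : IsTameTiling e) : IsTameTiling (Function.swap e) :=
  fun i j => by rw [← h j i, ← Matrix.det_transpose]; rfl

def rowCoeff (e : ℤ → ℤ → R) (i j : ℤ) : R :=
  e i j * e (i + 2) (j + 1) - e i (j + 1) * e (i + 2) j

theorem IsSL2Tiling.row_recurrence (h : IsSL2Tiling e) (i j : ℤ) :
    e (i + 2) j = rowCoeff e i j * e (i + 1) j - e i j := by
  have h₂ := h (i + 1) j
  rw [add_assoc, one_add_one_eq_two] at h₂
  unfold rowCoeff
  linear_combination (-e (i + 2) j) * h i j - e i j * h₂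

theorem IsSL2Tiling.row_recurrence_succ (h : IsSL2Tiling e) (i j : ℤ) :
    e (i + 2) (j + 1) = rowCoeff e i j * e (i + 1) (j + 1) - e i (j + 1) := by
  have h₂ := h (i + 1) j
  rw [add_assoc, one_add_one_eq_two] at h₂
  unfold rowCoeff
  linear_combination (-e (i + 2) (j + 1)) * h i j - e i (j + 1) * h₂

theorem IsTameTiling.row_recurrence_add_two (ht : IsTameTiling e) (h : IsSL2Tiling e) (i j : ℤ) :
    e (i + 2) (j + 2) = rowCoeff e i j * e (i + 1) (j + 2) - e i (j + 2) := by
  have hdet := ht i j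
  simp only [Matrix.det_fin_three, Fin.isValue, Matrix.of_apply, Fin.coe_ofNat_eq_mod,
    Nat.zero_mod, CharP.cast_eq_zero, add_zero, Nat.one_mod, Nat.cast_one, Nat.mod_succ,
    Nat.cast_ofNat] at hdet
  have h₀ := h.row_recurrence i j
  have h₁ := h.row_recurrence_succ i j
  unfold rowCoeff at *
  linear_combination hdet - (e (i + 2) (j + 2) + e i (j + 2)) * h i j
      + e i (j + 2) * e (i + 1) (j + 1) * h₀ - e i (j + 2) * e (i + 1) j * h₁

theorem IsTameTiling.rowCoeff_add_one (ht : IsTameTiling e) (h : IsSL2Tiling e) (i j : ℤ) :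
    rowCoeff e i (j + 1) = rowCoeff e i j := by
  have h₂ := ht.row_recurrence_add_two h i j
  have h₁ := h.row_recurrence_succ i j
  have h₀ := h i (j + 1)
  rw [add_assoc, one_add_one_eq_two] at h₀
  rw [rowCoeff, add_assoc j 1 1, one_add_one_eq_two]
  linear_combination e i (j + 1) * h₂ - e i (j + 2) * h₁ + rowCoeff e i j * h₀

theorem IsTameTiling.rowCoeff_eq (ht : IsTameTiling e) (h : IsSL2Tiling e) (i j k : ℤ) :
    rowCoeff e i j = rowCoeff e i k := by
  induction j using Int.inductionOn' (b := k) with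
  | zero => rfl
  | succ n _ ih => rw [ht.rowCoeff_add_one h, ih]
  | pred n _ ih => rw [← ih, ← ht.rowCoeff_add_one h, sub_add_cancel]

end Tiling

section Frieze

variable {R : Type*} [CommRing R] {e : ℤ → ℤ → R}

theorem frieze_row_recurrence (h : IsSL2Tiling e) (ht : IsTameTiling e)
    (hb0 : ∀ i : ℤ, e i (i - 2) = 0) (hb1 : ∀ i : ℤ, e i (i - 1) = 1) (i j : ℤ) :
    e (i + 2) j = e i i * e (i + 1) j - e i j := by
  have h₀ := hb0 (i + 2)
  have h₁ := hb1 (i + 2)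
  rw [add_sub_cancel_right] at h₀
  rw [show i + 2 - 1 = i + 1 by ring] at h₁
  have hcoeff : rowCoeff e i i = e i i := by simp [rowCoeff, h₀, h₁]
  rw [h.row_recurrence, ht.rowCoeff_eq h i j i, hcoeff]

theorem frieze_col_recurrence (h : IsSL2Tiling e) (ht : IsTameTiling e)
    (hb0 : ∀ i : ℤ, e i (i - 2) = 0) (hb1 : ∀ i : ℤ, e i (i - 1) = 1) (i j : ℤ) :
    e i (j + 2) = e (j + 2) (j + 2) * e i (j + 1) - e i j := by
  have h₀ := hb0 (j + 2)
  have h₁ := hb1 (j + 1)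
  rw [add_sub_cancel_right] at h₀
  rw [add_sub_cancel_right] at h₁
  have hcoeff : rowCoeff (Function.swap e) j (j + 1) = e (j + 2) (j + 2) := by
    simp [rowCoeff, Function.swap, h₀, h₁, add_assoc, one_add_one_eq_two]
  have hrec := h.swap.row_recurrence j i
  rwa [ht.swap.rowCoeff_eq h.swap j i (j + 1), hcoeff] at hrec

end Frieze

/-- **Glide symmetry of tame Coxeter frieze patterns.**
A tame Coxeter frieze pattern of width `m` over `ℝ` is invariant under the glide
reflection with respect to the horizontal median line:
`e i j = e (j+2) (i+m+1)` for all `i j : ℤ`. -/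
theorem coxeter_frieze_glide_symmetry (m : ℕ) (e : ℤ → ℤ → ℝ)
    (hb0 : ∀ i : ℤ, e i (i - 2) = 0)
    (hb1 : ∀ i : ℤ, e i (i - 1) = 1)
    (hb2 : ∀ i : ℤ, e i (i + m) = 1)
    (hb3 : ∀ i : ℤ, e i (i + m + 1) = 0)
    (huni : ∀ i j : ℤ,
      e i j * e (i + 1) (j + 1) - e i (j + 1) * e (i + 1) j = 1)
    (htame : ∀ i j : ℤ,
      Matrix.det (Matrix.of fun r c : Fin 3 =>
        e (i + (r : ℕ)) (j + (c : ℕ))) = 0) :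
    ∀ i j : ℤ, e i j = e (j + 2) (i + (m : ℤ) + 1) := by
  intro i
  refine congrFun (eq_of_recurrence (a := fun j => e (j + 2) (j + 2)) (u := e i)
    (v := fun j => e (j + 2) (i + m + 1)) (k := i - 2)
    (frieze_col_recurrence huni htame hb0 hb1 i) (fun j => ?_) ?_ ?_)
  · rw [add_right_comm j 1 2]
    exact frieze_row_recurrence huni htame hb0 hb1 (j + 2) _
  · rw [sub_add_cancel, hb0, hb3]
  · rw [show i - 2 + 1 = i - 1 by ring, show i - 1 + 2 = i + 1 by ring,
      show i + (m : ℤ) + 1 = i + 1 + m by ring, hb1, hb2]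
end

section
/- Let m ≥ 0 be an integer and a : ℤ → ℝ a sequence. Then the following are equivalent: (1) the frieze determined by a is closed of width m, i.e. for every i ∈ ℤ one has K(a_i,…,a_{i+m}) = 1 and K(a_i,…,a_{i+m+1}) = 0; (2) the sequence a is (m+3)-periodic (a_{i+m+3} = a_i for all i) and the three conditions K(a_1,…,a_{m+2}) = 0, K(a_2,…,a_{m+3}) = 0 and K(a_2,…,a_{m+2}) = 1 hold. -/
/-- The continuant `K(a_i, …, a_j)`: the determinant of the tridiagonal
`(j-i+1) × (j-i+1)` matrix with diagonal entries `a_i, …, a_j` and `1`'s on the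
sub- and super-diagonal.  By convention, for `j = i - 1` (empty range) it is `1`. -/
noncomputable def continuant (a : ℤ → ℝ) (i j : ℤ) : ℝ :=
  Matrix.det (Matrix.of fun r c : Fin (j - i + 1).toNat =>
    if (r : ℕ) = (c : ℕ) then a (i + (r : ℕ))
    else if (r : ℕ) = (c : ℕ) + 1 ∨ (c : ℕ) = (r : ℕ) + 1 then 1 else 0)

/-! Expanding the tridiagonal determinant along its first row gives the recursion
`K(a_i,…,a_j) = a_i K(a_{i+1},…,a_j) - K(a_{i+2},…,a_j)`, and the same recursion holds at the
right end. In a closed frieze, computing `K(a_i,…,a_{i+m+3})` from both ends gives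
`-a_{i+m+3} = -a_i`, hence periodicity. Conversely, the Casoratian identity
`K(a_i,…,a_j) K(a_{i+1},…,a_{j+1}) - K(a_i,…,a_{j+1}) K(a_{i+1},…,a_j) = 1` and the two
recursions carry the three equations, shifted to start at `a_i` instead of `a_1`, from `i` to
`i + 1` (using `a_{i+m+3} = a_i`), and
periodicity of the continuants carries them back from `i + m + 3` to `i`. -/

theorem Int.forall_of_succ_of_add_period {P : ℤ → Prop} {T : ℕ} (hT : 0 < T)
    (succ : ∀ i, P i → P (i + 1)) (period : ∀ i, P (i + T) → P i) {b : ℤ} (hb : P b) (i : ℤ) :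
    P i := by
  have add_nat (n : ℕ) : ∀ j, P j → P (j + n) := by
    induction n with
    | zero => simp
    | succ n ih => exact fun j hj => by simpa [← add_assoc] using succ _ (ih j hj)
  induction i using Int.inductionOn' (b := b) with
  | zero => exact hb
  | succ k _ hk => exact succ k hk
  | pred k _ hk =>
    apply period
    have := add_nat (T - 1) k hk
    rwa [show k + (T - 1 : ℕ) = k - 1 + T by omega] at this

section Continuant

variable {R : Type*} [CommRing R] (a : ℤ → R)

def tridiagonal (i : ℤ) (n : ℕ) : Matrix (Fin n) (Fin n) R :=
  Matrix.of fun r c =>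
    if (r : ℕ) = (c : ℕ) then a (i + (r : ℕ))
    else if (r : ℕ) = (c : ℕ) + 1 ∨ (c : ℕ) = (r : ℕ) + 1 then 1 else 0

/-- `continuantFrom a i n = K(a_i, …, a_{i+n-1})`. -/
def continuantFrom : ℤ → ℕ → R
  | _, 0 => 1
  | i, 1 => a i
  | i, n + 2 => a i * continuantFrom (i + 1) (n + 1) - continuantFrom (i + 2) n

theorem tridiagonal_submatrix_succ (i : ℤ) (n : ℕ) :
    (tridiagonal a i (n + 1)).submatrix Fin.succ Fin.succ = tridiagonal a (i + 1) n := by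
  ext r c
  simp [tridiagonal, add_assoc, add_comm (1 : ℤ)]

theorem det_tridiagonal_add_two (i : ℤ) (n : ℕ) :
    (tridiagonal a i (n + 2)).det =
      a i * (tridiagonal a (i + 1) (n + 1)).det - (tridiagonal a (i + 2) n).det := by
  have minor : ((tridiagonal a i (n + 2)).submatrix Fin.succ (Fin.succAbove 1)).det =
      (tridiagonal a (i + 2) n).det := by
    have hcol : Fin.succAbove (1 : Fin (n + 2)) ∘ Fin.succ = Fin.succ ∘ Fin.succ := by
      funext c
      exact Fin.succ_succAbove_succ 0 c
    rw [Matrix.det_succ_column_zero, Fin.sum_univ_succ, Finset.sum_eq_zero (fun r _ => ?_), add_zero]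
    · simp only [Matrix.submatrix_submatrix, Fin.succAbove_zero, hcol]
      rw [← Matrix.submatrix_submatrix, tridiagonal_submatrix_succ, tridiagonal_submatrix_succ,
        add_assoc i 1 1, one_add_one_eq_two]
      simp [tridiagonal]
    · simp [tridiagonal]
  rw [Matrix.det_succ_row_zero, Fin.sum_univ_succ, Fin.sum_univ_succ,
    Finset.sum_eq_zero (fun j _ => ?_), add_zero]
  · have entry₀₀ : tridiagonal a i (n + 2) 0 0 = a i := by simp [tridiagonal]
    have entry₀₁ : tridiagonal a i (n + 2) 0 1 = 1 := by simp [tridiagonal]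
    rw [Fin.succAbove_zero, tridiagonal_submatrix_succ, Fin.succ_zero_eq_one, minor, entry₀₀,
      entry₀₁, Fin.val_zero, Fin.val_one, pow_zero, pow_one]
    ring
  · simp [tridiagonal]

theorem det_tridiagonal : ∀ (i : ℤ) (n : ℕ), (tridiagonal a i n).det = continuantFrom a i n
  | _, 0 => Matrix.det_isEmpty
  | i, 1 => by simp [tridiagonal, continuantFrom]
  | i, n + 2 => by
    rw [det_tridiagonal_add_two, det_tridiagonal (i + 1) (n + 1), det_tridiagonal (i + 2) n]
    rfl

theorem continuantFrom_add_two (i : ℤ) (n : ℕ) :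
    continuantFrom a i (n + 2) = a i * continuantFrom a (i + 1) (n + 1) - continuantFrom a (i + 2) n :=
  rfl

theorem continuantFrom_add_two' : ∀ (i : ℤ) (n : ℕ),
    continuantFrom a i (n + 2) = a (i + n + 1) * continuantFrom a i (n + 1) - continuantFrom a i n
  | i, 0 => by
    simp only [continuantFrom, Nat.cast_zero, add_zero]
    ring
  | i, 1 => by
    simp only [continuantFrom, Nat.cast_one, add_assoc, one_add_one_eq_two]
    ring
  | i, n + 2 => by
    rw [continuantFrom_add_two, continuantFrom_add_two' (i + 1) (n + 1),
      continuantFrom_add_two' (i + 2) n, continuantFrom_add_two a i (n + 1), continuantFrom_add_two a i n]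
    rw [show i + 1 + ((n + 1 : ℕ) : ℤ) + 1 = i + ((n + 2 : ℕ) : ℤ) + 1 by push_cast; ring,
      show i + 2 + (n : ℤ) + 1 = i + ((n + 2 : ℕ) : ℤ) + 1 by push_cast; ring]
    ring

theorem continuantFrom_casoratian (i : ℤ) (n : ℕ) :
    continuantFrom a i (n + 1) * continuantFrom a (i + 1) (n + 1) -
      continuantFrom a i (n + 2) * continuantFrom a (i + 1) n = 1 := by
  induction n with
  | zero => simp [continuantFrom]
  | succ n ih =>
    rw [continuantFrom_add_two' a i (n + 1), continuantFrom_add_two' a (i + 1) n]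
    rw [show i + 1 + (n : ℤ) + 1 = i + (n + 1 : ℕ) + 1 by push_cast; ring]
    linear_combination ih

theorem continuantFrom_add_period {T : ℤ} (h : Function.Periodic a T) :
    ∀ (i : ℤ) (n : ℕ), continuantFrom a (i + T) n = continuantFrom a i n
  | _, 0 => rfl
  | i, 1 => h i
  | i, n + 2 => by
    rw [continuantFrom_add_two, continuantFrom_add_two, h, ← continuantFrom_add_period h (i + 1),
      ← continuantFrom_add_period h (i + 2), add_right_comm, add_right_comm i T 2]

end Continuant

section Frieze

variable {R : Type*} [CommRing R] {a : ℤ → R} {m : ℕ}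

def IsClosedFrieze (a : ℤ → R) (m : ℕ) : Prop :=
  (∀ i, continuantFrom a i (m + 1) = 1) ∧ ∀ i, continuantFrom a i (m + 2) = 0

theorem IsClosedFrieze.continuantFrom_add_three (h : IsClosedFrieze a m) (i : ℤ) :
    continuantFrom a i (m + 3) = -1 := by
  rw [continuantFrom_add_two', h.1, h.2]
  ring

theorem IsClosedFrieze.periodic (h : IsClosedFrieze a m) : Function.Periodic a (m + 3) := by
  intro i
  have hleft := continuantFrom_add_two a i (m + 2)
  have hright := continuantFrom_add_two' a i (m + 2)
  rw [h.continuantFrom_add_three, h.2] at hleft hright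
  rw [show i + ((m + 2 : ℕ) : ℤ) + 1 = i + (m + 3) by push_cast; ring] at hright
  linear_combination hright - hleft

theorem three_equations_succ {i : ℤ} (hper : a (i + (m + 3)) = a i)
    (h₀ : continuantFrom a i (m + 2) = 0) (h₁ : continuantFrom a (i + 1) (m + 1) = 1)
    (h₂ : continuantFrom a (i + 1) (m + 2) = 0) :
    continuantFrom a (i + 2) (m + 1) = 1 ∧ continuantFrom a (i + 2) (m + 2) = 0 := by
  have last : continuantFrom a i (m + 3) = -1 := by
    linear_combination -continuantFrom_casoratian a i (m + 1) +
      continuantFrom a (i + 1) (m + 2) * h₀ - continuantFrom a i (m + 3) * h₁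
  have h₁' : continuantFrom a (i + 1) (m + 3) = -1 := by
    rw [continuantFrom_add_two', h₁, h₂]
    ring
  have hleft := continuantFrom_add_two a i (m + 1)
  have hleft' := continuantFrom_add_two a i (m + 2)
  have hright := continuantFrom_add_two' a i (m + 2)
  rw [show i + ((m + 2 : ℕ) : ℤ) + 1 = i + (m + 3) by push_cast; ring, hper] at hright
  constructor
  · linear_combination hleft - last + a i * h₂
  · linear_combination hleft' - hright - a i * last + h₀ + a i * h₁'

theorem isClosedFrieze_of_periodic (hper : Function.Periodic a (m + 3))
    (h₀ : continuantFrom a 1 (m + 2) = 0) (h₁ : continuantFrom a 2 (m + 1) = 1)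
    (h₂ : continuantFrom a 2 (m + 2) = 0) : IsClosedFrieze a m := by
  have key : ∀ i, continuantFrom a i (m + 2) = 0 ∧ continuantFrom a (i + 1) (m + 1) = 1 ∧
      continuantFrom a (i + 1) (m + 2) = 0 := by
    refine Int.forall_of_succ_of_add_period (T := m + 3) (by omega)
      (fun i ⟨e₀, e₁, e₂⟩ => ?_) (fun i h => ?_) (b := 1) ⟨h₀, h₁, h₂⟩
    · rw [add_assoc, one_add_one_eq_two]
      exact ⟨e₂, three_equations_succ (hper i) e₀ e₁ e₂⟩
    · push_cast at h
      simpa only [add_right_comm _ _ (1 : ℤ), continuantFrom_add_period a hper] using h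
  exact ⟨fun i => by simpa using (key (i - 1)).2.1, fun i => (key i).1⟩

theorem isClosedFrieze_iff : IsClosedFrieze a m ↔ Function.Periodic a (m + 3) ∧
    continuantFrom a 1 (m + 2) = 0 ∧ continuantFrom a 2 (m + 2) = 0 ∧
      continuantFrom a 2 (m + 1) = 1 :=
  ⟨fun h => ⟨h.periodic, h.2 1, h.2 2, h.1 2⟩,
    fun ⟨hper, h₀, h₂, h₁⟩ => isClosedFrieze_of_periodic hper h₀ h₁ h₂⟩

end Frieze

theorem continuant_eq_continuantFrom (a : ℤ → ℝ) {i j : ℤ} {n : ℕ} (h : j - i + 1 = n) :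
    continuant a i j = continuantFrom a i n := by
  rw [continuant, ← det_tridiagonal, show (j - i + 1).toNat = n by omega]
  rfl

/-- **Closedness criterion for friezes.**
The frieze determined by a sequence `a : ℤ → ℝ` is closed of width `m`
(for every `i`, `K(a_i,…,a_{i+m}) = 1` and `K(a_i,…,a_{i+m+1}) = 0`)
if and only if `a` is `(m+3)`-periodic and `K(a_1,…,a_{m+2}) = 0`,
`K(a_2,…,a_{m+3}) = 0`, `K(a_2,…,a_{m+2}) = 1`. -/
theorem frieze_closed_iff_periodic_and_three_equations (m : ℕ) (a : ℤ → ℝ) :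
    ((∀ i : ℤ, continuant a i (i + (m : ℤ)) = 1) ∧
     (∀ i : ℤ, continuant a i (i + (m : ℤ) + 1) = 0)) ↔
    ((∀ i : ℤ, a (i + ((m : ℤ) + 3)) = a i) ∧
      continuant a 1 ((m : ℤ) + 2) = 0 ∧
      continuant a 2 ((m : ℤ) + 3) = 0 ∧
      continuant a 2 ((m : ℤ) + 2) = 1) := by
  have hK (i j : ℤ) (n : ℕ) (h : j - i + 1 = n) := continuant_eq_continuantFrom a h
  simp only [fun i => hK i (i + m) (m + 1) (by omega), fun i => hK i (i + m + 1) (m + 2) (by omega),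
    hK 1 (m + 2) (m + 2) (by omega), hK 2 (m + 3) (m + 2) (by omega), hK 2 (m + 2) (m + 1) (by omega)]
  exact isClosedFrieze_iff
end

section
/- Let k ≥ 1 be an integer, F a field, and let f : ℤ × ℤ → F be a tame SL_{k+1}-tiling. Define the projective dual f* : ℤ × ℤ → F by letting f*(i,j) be the adjacent minor of order k of f based at (i,j) (for k = 1, the empty-minor convention gives f*(i,j) = f(i,j)). Then f* is again a tame SL_{k+1}-tiling: every adjacent minor of order k+1 of f* equals 1, and every adjacent minor of order k+2 of f* equals 0. -/
/-!
A tame `SL_{k+1}`-tiling has rank `k + 1`: since its `(k+2)`-minors vanish while its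
`(k+1)`-minors do not, every row is a fixed linear combination of the `k + 1` rows above it, so
`f i j = u i ⬝ᵥ v j` for sequences `u`, `v` in `F^{k+1}` all of whose windows of `k + 1`
consecutive vectors have determinant one; conversely every such product is a tame tiling.
Multiplicativity of the adjugate turns the `k`-minors of `u ⬝ᵥ v` into `u* i ⬝ᵥ v* j`, where
`u* i` is the generalized cross product of `u i, …, u (i + k - 1)`, and `u*` again has windows of
determinant one because the matrix `(u* (i + s) ⬝ᵥ u (i + k + r))` is unitriangular.
-/

/-- The adjacent minor of order `r` of `f : ℤ → ℤ → F` based at `(i, j)`: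
the determinant of the `r × r` matrix `(f (i+s) (j+t))_{0 ≤ s,t ≤ r-1}`. -/
noncomputable def adjMinor {F : Type*} [Field F] (f : ℤ → ℤ → F) (r : ℕ) (i j : ℤ) : F :=
  Matrix.det (Matrix.of fun s t : Fin r => f (i + (s : ℕ)) (j + (t : ℕ)))

open Matrix

section CommRing

variable {R : Type*} [CommRing R]

def window {n : ℕ} (u : ℤ → Fin n → R) (m : ℕ) (i : ℤ) : Matrix (Fin m) (Fin n) R :=
  of fun s => u (i + (s : ℕ))

def IsUnimodularSeq {n : ℕ} (u : ℤ → Fin n → R) : Prop :=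
  ∀ i, (window u n i).det = 1

theorem adjugate_last_last {n : ℕ} (A : Matrix (Fin (n + 1)) (Fin (n + 1)) R) :
    adjugate A (Fin.last n) (Fin.last n) = (A.submatrix Fin.castSucc Fin.castSucc).det := by
  rw [adjugate_fin_succ_eq_det_submatrix, Fin.succAbove_last, ← two_mul, pow_mul, neg_one_sq,
    one_pow, one_mul]

/-- The generalized cross product of `u i, …, u (i + n - 1)`: by Laplace expansion along the last
row, `w ⬝ᵥ dualSeq u i` is the determinant with rows `u i, …, u (i + n - 1), w`. -/
def dualSeq {n : ℕ} (u : ℤ → Fin (n + 1) → R) (i : ℤ) : Fin (n + 1) → R :=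
  fun m => adjugate (window u (n + 1) i) m (Fin.last n)

theorem dotProduct_dualSeq {n : ℕ} (u : ℤ → Fin (n + 1) → R) (i : ℤ) (t : Fin (n + 1)) :
    u (i + (t : ℕ)) ⬝ᵥ dualSeq u i =
      if t = Fin.last n then (window u (n + 1) i).det else 0 := by
  have h := congrFun (congrFun (mul_adjugate (window u (n + 1) i)) t) (Fin.last n)
  rwa [Matrix.smul_apply, one_apply, smul_eq_mul, mul_ite, mul_one, mul_zero] at h

theorem dualSeq_apply_last {n : ℕ} (u : ℤ → Fin (n + 1) → R) (i : ℤ) :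
    dualSeq u i (Fin.last n) = (window (fun i => Fin.init (u i)) n i).det :=
  adjugate_last_last _

theorem IsUnimodularSeq.dualSeq {n : ℕ} {u : ℤ → Fin (n + 1) → R} (hu : IsUnimodularSeq u) :
    IsUnimodularSeq (_root_.dualSeq u) := by
  intro i
  set Q := window (_root_.dualSeq u) (n + 1) i * (window u (n + 1) (i + n))ᵀ
  -- `u (i + n + r)` is row `n + r - s` of the window at `i + s`
  have hQ : ∀ s r : Fin (n + 1), r ≤ s → Q s r = if r = s then 1 else 0 := by
    intro s r hrs
    have hrs' : (r : ℕ) ≤ s := hrs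
    have h := dotProduct_dualSeq u (i + (s : ℕ)) ⟨n + r - s, by omega⟩
    rw [hu, show i + (s : ℕ) + ((n + r - s : ℕ) : ℤ) = i + n + (r : ℕ) by omega,
      dotProduct_comm] at h
    simp only [Fin.ext_iff, Fin.val_last] at h ⊢
    exact h.trans (if_congr (by omega) rfl rfl)
  have hdet : Q.det = 1 := by
    rw [det_of_isUpperTriangular fun s r hrs => (hQ s r hrs.le).trans (if_neg hrs.ne)]
    exact Finset.prod_eq_one fun s _ => by rw [hQ s s le_rfl, if_pos rfl]
  rwa [det_mul, det_transpose, hu, mul_one] at hdet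

end CommRing

section Field

variable {F : Type*} [Field F]

theorem adjMinor_dotProduct {n : ℕ} (u v : ℤ → Fin n → F) (r : ℕ) (i j : ℤ) :
    adjMinor (fun i j => u i ⬝ᵥ v j) r i j = (window u r i * (window v r j)ᵀ).det :=
  rfl

theorem adjMinor_dotProduct_eq_one {n : ℕ} {u v : ℤ → Fin n → F} (hu : IsUnimodularSeq u)
    (hv : IsUnimodularSeq v) (i j : ℤ) : adjMinor (fun i j => u i ⬝ᵥ v j) n i j = 1 := by
  rw [adjMinor_dotProduct, det_mul, det_transpose, hu, hv, one_mul]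

theorem adjMinor_dotProduct_eq_zero {n r : ℕ} (u v : ℤ → Fin n → F) (hnr : n < r)
    (i j : ℤ) : adjMinor (fun i j => u i ⬝ᵥ v j) r i j = 0 := by
  rw [adjMinor_dotProduct]
  by_contra h
  have hrank := rank_of_det_mem_nonZeroDivisors (mem_nonZeroDivisors_of_ne_zero h)
  have := (rank_mul_le_left (window u r i) (window v r j)ᵀ).trans (rank_le_width _)
  simp only [Fintype.card_fin] at hrank
  omega

theorem adjMinor_dotProduct_eq_dualSeq {n : ℕ} (u v : ℤ → Fin (n + 1) → F) (i j : ℤ) :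
    adjMinor (fun i j => u i ⬝ᵥ v j) n i j = dualSeq u i ⬝ᵥ dualSeq v j := by
  have h := adjugate_last_last (window u (n + 1) i * (window v (n + 1) j)ᵀ)
  rw [adjugate_mul_distrib, ← adjugate_transpose, mul_apply] at h
  simp only [dotProduct, dualSeq]
  simp_rw [mul_comm (adjugate (window u (n + 1) i) _ _)]
  exact h.symm

theorem exists_forall_dotProduct_eq_zero {n : ℕ} (x : ℤ → Fin (n + 1) → F)
    (hsing : ∀ j, (window x (n + 1) j).det = 0)
    (hinit : IsUnimodularSeq fun j => Fin.init (x j)) :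
    ∃ c : Fin (n + 1) → F, c (Fin.last n) = 1 ∧ ∀ j, x j ⬝ᵥ c = 0 := by
  have hkill : ∀ j (t : Fin (n + 1)), x (j + (t : ℕ)) ⬝ᵥ dualSeq x j = 0 := fun j t => by
    rw [dotProduct_dualSeq, hsing, ite_self]
  have hlast : ∀ j, dualSeq x j (Fin.last n) = 1 := fun j =>
    (dualSeq_apply_last x j).trans (hinit j)
  -- both normals kill `x (j + 1), …, x (j + n)`, which pin down a normal with last coordinate `1`
  have hperiodic : Function.Periodic (dualSeq x) 1 := by
    intro j
    set δ := dualSeq x (j + 1) - dualSeq x j with hδ_def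
    have hδ : ∀ t : Fin n, x (j + 1 + (t : ℕ)) ⬝ᵥ δ = 0 := fun t => by
      have h := hkill j t.succ
      rw [Fin.val_succ, Nat.cast_succ, ← add_assoc, add_right_comm] at h
      rw [dotProduct_sub, h, sub_zero]
      exact hkill (j + 1) t.castSucc
    have hinit0 : Fin.init δ = 0 := by
      have hδlast : δ (Fin.last n) = 0 := by rw [hδ_def, Pi.sub_apply, hlast, hlast, sub_self]
      refine eq_zero_of_mulVec_eq_zero (by rw [hinit (j + 1)]; exact one_ne_zero)
        (funext fun t => ?_)
      have h := hδ t
      rwa [dotProduct, Fin.sum_univ_castSucc, hδlast, mul_zero, add_zero] at h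
    ext m
    induction m using Fin.lastCases with
    | last => rw [hlast, hlast]
    | cast m => exact sub_eq_zero.mp (congrFun hinit0 m)
  refine ⟨dualSeq x 0, hlast 0, fun j => ?_⟩
  simpa [← hperiodic.int_mul_eq j] using hkill j 0

section Tiling

variable {f : ℤ → ℤ → F}

theorem linearIndependent_rows {r : ℕ} (hSL : ∀ i j, adjMinor f r i j = 1) (i : ℤ) :
    LinearIndependent F fun s : Fin r => f (i + (s : ℕ)) := by
  refine Fintype.linearIndependent_iff.mpr fun g hg => ?_
  refine congrFun (eq_zero_of_vecMul_eq_zero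
    (M := of fun s t : Fin r => f (i + (s : ℕ)) (0 + (t : ℕ)))
    (by rw [← adjMinor, hSL]; exact one_ne_zero) (funext fun t => ?_))
  simpa [vecMul, dotProduct, Finset.sum_apply] using congrFun hg (0 + (t : ℕ))

theorem row_mem_span_preceding_rows {k : ℕ} (hSL : ∀ i j, adjMinor f (k + 1) i j = 1)
    (htame : ∀ i j, adjMinor f (k + 2) i j = 0) (i : ℤ) :
    f (i + k + 1) ∈ Submodule.span F (Set.range fun s : Fin (k + 1) => f (i + (s : ℕ))) := by
  obtain ⟨c, hc_last, hc⟩ := exists_forall_dotProduct_eq_zero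
    (fun j (s : Fin (k + 2)) => f (i + (s : ℕ)) j)
    (fun j => by rw [← htame i j, adjMinor, ← det_transpose]; rfl)
    (fun j => by rw [← hSL i j, adjMinor, ← det_transpose]; rfl)
  refine (Submodule.mem_span_range_iff_exists_fun F).mpr
    ⟨fun s => -c s.castSucc, funext fun j => ?_⟩
  have h := hc j
  rw [dotProduct, Fin.sum_univ_castSucc, hc_last, Fin.val_last] at h
  simp only [Finset.sum_apply, Pi.smul_apply, smul_eq_mul, Fin.val_castSucc, neg_mul,
    Finset.sum_neg_distrib, mul_comm (c _)] at h ⊢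
  push_cast [← add_assoc] at h
  linear_combination -h

/-- Shifting the span of `k + 1` consecutive rows down by one row can only shrink it, by the
recurrence, and cannot change its dimension `k + 1`; so all these spans coincide. -/
theorem row_mem_span_initial_rows {k : ℕ} (hSL : ∀ i j, adjMinor f (k + 1) i j = 1)
    (htame : ∀ i j, adjMinor f (k + 2) i j = 0) (i : ℤ) :
    f i ∈ Submodule.span F (Set.range fun s : Fin (k + 1) => f (s : ℕ)) := by
  set S : ℤ → Submodule F (ℤ → F) :=
    fun i => Submodule.span F (Set.range fun s : Fin (k + 1) => f (i + (s : ℕ)))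
  have hS : Function.Periodic S 1 := by
    intro i
    have := FiniteDimensional.span_of_finite F
      (Set.finite_range fun s : Fin (k + 1) => f (i + (s : ℕ)))
    refine Submodule.eq_of_le_of_finrank_eq (Submodule.span_le.mpr ?_) ?_
    · rintro _ ⟨s, rfl⟩
      induction s using Fin.lastCases with
      | last => simpa [add_right_comm] using row_mem_span_preceding_rows hSL htame i
      | cast s => exact Submodule.subset_span ⟨s.succ, by simp [add_right_comm, add_assoc]⟩
    · rw [finrank_span_eq_card (linearIndependent_rows hSL _),
        finrank_span_eq_card (linearIndependent_rows hSL _)]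
  have hmem : f i ∈ S i := Submodule.subset_span ⟨0, by simp⟩
  rw [show S i = S 0 by simpa using hS.int_mul_eq i] at hmem
  simpa [S] using hmem

theorem exists_isUnimodularSeq_dotProduct {k : ℕ} (hSL : ∀ i j, adjMinor f (k + 1) i j = 1)
    (htame : ∀ i j, adjMinor f (k + 2) i j = 0) :
    ∃ u v : ℤ → Fin (k + 1) → F,
      IsUnimodularSeq u ∧ IsUnimodularSeq v ∧ f = fun i j => u i ⬝ᵥ v j := by
  choose u hu using fun i =>
    (Submodule.mem_span_range_iff_exists_fun F).mp (row_mem_span_initial_rows hSL htame i)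
  set v : ℤ → Fin (k + 1) → F := fun j s => f (s : ℕ) j
  have hf : f = fun i j => u i ⬝ᵥ v j := by
    ext i j
    rw [← hu i]
    simp [v, dotProduct, Finset.sum_apply]
  have hv : IsUnimodularSeq v := fun j => by
    rw [← hSL 0 j, adjMinor, ← det_transpose]
    simp [v, window, transpose]
  refine ⟨u, v, fun i => ?_, hv, hf⟩
  have h := hSL i 0
  rwa [hf, adjMinor_dotProduct, det_mul, det_transpose, hv, mul_one] at h

end Tiling

end Field

theorem projective_dual_is_tame_slk_tiling_general {F : Type*} [Field F] (k : ℕ)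
    (f : ℤ → ℤ → F)
    (hSL : ∀ i j : ℤ, adjMinor f (k + 1) i j = 1)
    (htame : ∀ i j : ℤ, adjMinor f (k + 2) i j = 0) :
    (∀ i j : ℤ, adjMinor (fun i' j' => adjMinor f k i' j') (k + 1) i j = 1) ∧
    (∀ i j : ℤ, adjMinor (fun i' j' => adjMinor f k i' j') (k + 2) i j = 0) := by
  obtain ⟨u, v, hu, hv, rfl⟩ := exists_isUnimodularSeq_dotProduct hSL htame
  simp only [adjMinor_dotProduct_eq_dualSeq]
  exact ⟨adjMinor_dotProduct_eq_one hu.dualSeq hv.dualSeq,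
    adjMinor_dotProduct_eq_zero _ _ (Nat.lt_succ_self _)⟩

/-- **The projective dual of a tame `SL_{k+1}`-tiling is a tame `SL_{k+1}`-tiling.**
For a tame `SL_{k+1}`-tiling `f` over a field `F`, the projective dual
`f* (i, j) := adjMinor f k i j` is again a tame `SL_{k+1}`-tiling: all its adjacent
minors of order `k+1` equal `1` and all its adjacent minors of order `k+2` vanish. -/
theorem projective_dual_is_tame_slk_tiling {F : Type*} [Field F] (k : ℕ) (hk : 1 ≤ k)
    (f : ℤ → ℤ → F)
    (hSL : ∀ i j : ℤ, adjMinor f (k + 1) i j = 1)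
    (htame : ∀ i j : ℤ, adjMinor f (k + 2) i j = 0) :
    (∀ i j : ℤ, adjMinor (fun i' j' => adjMinor f k i' j') (k + 1) i j = 1) ∧
    (∀ i j : ℤ, adjMinor (fun i' j' => adjMinor f k i' j') (k + 2) i j = 0) :=
  projective_dual_is_tame_slk_tiling_general k f hSL htame
end
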